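/- arXiv:2409.01912 — 2 statements merged into one kernel-verified Lean document; each statement's English description precedes it below -/
import Mathlib

section
/- Let V be a finite-dimensional real vector space. For any subspace E ≤ V ⊗ ℂ and any alternating bilinear form σ ∈ ∧²E*, the subspace L(E,σ) := {A + ξ ∈ E ⊕ (V* ⊗ ℂ) : ξ|_E = σ(A, ·)} is a maximal isotropic subspace of (V ⊕ V*) ⊗ ℂ with respect to the symmetric pairing ⟨A₁+ξ, A₂+η⟩ = ½(ξ(A₂) + η(A₁)). -/
/-- The canonical symmetric pairing on `W ⊕ W*` (here `W` plays the role of `V ⊗ ℂ`),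
`⟨A₁+ξ, A₂+η⟩ = ½(ξ(A₂) + η(A₁))`. -/
noncomputable def gcPair {W : Type*} [AddCommGroup W] [Module ℂ W]
    (p q : W × Module.Dual ℂ W) : ℂ :=
  (p.2 q.1 + q.2 p.1) / 2

/-- The subspace `L(E,σ) = {A + ξ ∈ E ⊕ W* : ξ|_E = σ(A, ·)}`. -/
noncomputable def LESigma {W : Type*} [AddCommGroup W] [Module ℂ W]
    (E : Submodule ℂ W) (σ : W →ₗ[ℂ] W →ₗ[ℂ] ℂ) :
    Submodule ℂ (W × Module.Dual ℂ W) where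
  carrier := {p | p.1 ∈ E ∧ ∀ b ∈ E, p.2 b = σ p.1 b}
  add_mem' := by
    rintro p q ⟨hp1, hp2⟩ ⟨hq1, hq2⟩
    refine ⟨E.add_mem hp1 hq1, fun b hb => ?_⟩
    simp [hp2 b hb, hq2 b hb]
  zero_mem' := ⟨E.zero_mem, fun b _ => by simp⟩
  smul_mem' := by
    rintro c p ⟨hp1, hp2⟩
    refine ⟨E.smul_mem c hp1, fun b hb => ?_⟩
    simp [hp2 b hb]

/-- For any subspace `E ≤ V ⊗ ℂ` and any alternating bilinear form `σ` on `E`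
(here given as an alternating form on `V ⊗ ℂ`, restricted to `E`), the subspace
`L(E,σ) = {A + ξ ∈ E ⊕ (V* ⊗ ℂ) : ξ|_E = σ(A,·)}` is a maximal isotropic subspace of
`(V ⊕ V*) ⊗ ℂ`: it is isotropic for the canonical pairing and has complex dimension
`dim_ℝ V = dim_ℂ (V ⊗ ℂ)`. -/
theorem stmt0 {W : Type*} [AddCommGroup W] [Module ℂ W] [FiniteDimensional ℂ W]
    (E : Submodule ℂ W) (σ : W →ₗ[ℂ] W →ₗ[ℂ] ℂ) (hσ : ∀ a, σ a a = 0) :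
    (∀ p ∈ LESigma E σ, ∀ q ∈ LESigma E σ, gcPair p q = 0) ∧
      Module.finrank ℂ (LESigma E σ) = Module.finrank ℂ W := by
  constructor
  · rintro p ⟨hp1, hp2⟩ q ⟨hq1, hq2⟩
    have hanti : σ p.1 q.1 + σ q.1 p.1 = 0 := by
      have := hσ (p.1 + q.1)
      simp only [map_add, LinearMap.add_apply, hσ] at this
      linear_combination this
    simp only [gcPair, hp2 q.1 hq1, hq2 p.1 hp1]
    rw [hanti, zero_div]
  · -- projection to E
    let g : LESigma E σ →ₗ[ℂ] E :=
      { toFun := fun p => ⟨p.1.1, p.2.1⟩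
        map_add' := fun p q => rfl
        map_smul' := fun c p => rfl }
    have hsurj : Function.Surjective g := by
      rintro ⟨a, ha⟩
      exact ⟨⟨(a, σ a), ha, fun b _ => rfl⟩, rfl⟩
    have hrange : Module.finrank ℂ (LinearMap.range g) = Module.finrank ℂ E := by
      rw [LinearMap.range_eq_top.mpr hsurj]
      exact finrank_top ℂ E
    -- kernel ≃ dual annihilator of E
    let e : LinearMap.ker g ≃ₗ[ℂ] E.dualAnnihilator :=
      { toFun := fun p => ⟨p.1.1.2, by
          rw [Submodule.mem_dualAnnihilator]
          intro b hb
          have h1 : (p.1.1.1 : W) = 0 := congrArg Subtype.val p.2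
          have := p.1.2.2 b hb
          rw [this, h1, map_zero, LinearMap.zero_apply]⟩
        invFun := fun ξ => ⟨⟨(0, ξ.1), E.zero_mem, fun b hb => by
            rw [map_zero, LinearMap.zero_apply]
            exact (Submodule.mem_dualAnnihilator _).mp ξ.2 b hb⟩, by
          apply Subtype.ext
          have h1 : (((0 : W), ξ.1).1 : W) = 0 := rfl
          rfl⟩
        map_add' := fun p q => rfl
        map_smul' := fun c p => rfl
        left_inv := by
          rintro ⟨⟨⟨a, ξ⟩, hmem⟩, hker⟩
          have h1 : a = 0 := congrArg Subtype.val hker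
          apply Subtype.ext; apply Subtype.ext
          simp [h1]
        right_inv := fun ξ => rfl }
    have hker : Module.finrank ℂ (LinearMap.ker g) =
        Module.finrank ℂ E.dualAnnihilator := e.finrank_eq
    have hrn := LinearMap.finrank_range_add_finrank_ker g
    have hq := Submodule.finrank_quotient_add_finrank E
    have heq : Module.finrank ℂ (W ⧸ E) = Module.finrank ℂ E.dualAnnihilator :=
      (Subspace.quotEquivAnnihilator E).finrank_eq
    omega
end

section
/- Let V be a finite-dimensional real vector space and L ≤ (V ⊕ V*) ⊗ ℂ a maximal isotropic subspace with L ∩ L̄ = 0 (a linear generalized complex structure). Let E := ρ(L) ⊆ V ⊗ ℂ be the image of L under the projection ρ to V ⊗ ℂ. Then E + Ē = V ⊗ ℂ. -/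
/-- Complex conjugation on the dual `(V* ⊗ ℂ)`, induced by a conjugation `cj` on `W = V ⊗ ℂ`. -/
noncomputable def cjDual {W : Type*} [AddCommGroup W] [Module ℂ W]
    (cj : W →ₛₗ[starRingEnd ℂ] W) (ξ : Module.Dual ℂ W) : Module.Dual ℂ W where
  toFun w := starRingEnd ℂ (ξ (cj w))
  map_add' x y := by simp
  map_smul' c x := by simp [map_smulₛₗ]

/-- Let `L ≤ (V ⊕ V*) ⊗ ℂ` be a maximal isotropic subspace with `L ∩ L̄ = 0`
(a linear generalized complex structure), and let `E = ρ(L) ⊆ V ⊗ ℂ` be the image of `L` under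
the first projection `ρ`. Then `E + Ē = V ⊗ ℂ`: every `w ∈ V ⊗ ℂ` can be written as `a + cj b`
with `a, b ∈ E`. Here `W = V ⊗ ℂ` carries an involutive antilinear conjugation `cj`. -/
theorem stmt3 {W : Type*} [AddCommGroup W] [Module ℂ W] [FiniteDimensional ℂ W]
    (cj : W →ₛₗ[starRingEnd ℂ] W) (hcj : ∀ x, cj (cj x) = x)
    (L : Submodule ℂ (W × Module.Dual ℂ W))
    (hiso : ∀ p ∈ L, ∀ q ∈ L, gcPair p q = 0)
    (hmax : Module.finrank ℂ L = Module.finrank ℂ W)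
    (hLLbar : ∀ p ∈ L, (cj p.1, cjDual cj p.2) ∈ L → p = 0) :
    ∀ w : W, ∃ a ∈ Submodule.map (LinearMap.fst ℂ W (Module.Dual ℂ W)) L,
      ∃ b ∈ Submodule.map (LinearMap.fst ℂ W (Module.Dual ℂ W)) L, w = a + cj b := by
  classical
  set S := Submodule.map (LinearMap.fst ℂ W (Module.Dual ℂ W)) L with hS
  -- the bilinear form
  set B : LinearMap.BilinForm ℂ (W × Module.Dual ℂ W) :=
    LinearMap.mk₂ ℂ (fun p q => (p.2 q.1 + q.2 p.1) / 2)
      (by intros; simp; ring) (by intros; simp; ring)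
      (by intros; simp; ring) (by intros; simp; ring) with hB
  have hBapp : ∀ p q, B p q = (p.2 q.1 + q.2 p.1) / 2 := fun p q => rfl
  have hrefl : B.IsRefl := by
    intro p q h
    rw [hBapp] at h ⊢
    rw [add_comm]; exact h
  have hnd : B.Nondegenerate := by
    refine (LinearMap.IsRefl.nondegenerate_iff_separatingLeft hrefl).mpr ?_
    intro p hp
    have h1 : p.1 = 0 := by
      rw [← Module.forall_dual_apply_eq_zero_iff ℂ p.1]
      intro φ
      have := hp (0, φ)
      rw [hBapp] at this
      simpa using this
    have h2 : p.2 = 0 := by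
      ext x
      have := hp (x, 0)
      rw [hBapp] at this
      simp at this
      simpa using this
    exact Prod.ext h1 h2
  -- L equals its orthogonal
  have hle : L ≤ B.orthogonal L := by
    intro p hp q hq
    have := hiso q hq p hp
    rw [gcPair] at this
    rw [hBapp]
    exact this
  have hfr : Module.finrank ℂ (W × Module.Dual ℂ W) = 2 * Module.finrank ℂ W := by
    rw [Module.finrank_prod, Subspace.dual_finrank_eq]; ring
  have horth : Module.finrank ℂ (B.orthogonal L) = Module.finrank ℂ W := by
    rw [LinearMap.BilinForm.finrank_orthogonal hnd, hfr, hmax]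
    omega
  have hLeq : L = B.orthogonal L :=
    Submodule.eq_of_le_of_finrank_le hle (by rw [horth, hmax])
  -- key: a functional vanishing on S and cj '' S is zero
  have key : ∀ ξ : Module.Dual ℂ W, (∀ a ∈ S, ξ a = 0) → (∀ b ∈ S, ξ (cj b) = 0) → ξ = 0 := by
    intro ξ h1 h2
    have hmem1 : ((0, ξ) : W × Module.Dual ℂ W) ∈ L := by
      rw [hLeq]
      intro p hp
      rw [hBapp]
      have : ξ p.1 = 0 := h1 p.1 ⟨p, hp, rfl⟩
      simp [this]
    have hmem2 : ((0, cjDual cj ξ) : W × Module.Dual ℂ W) ∈ L := by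
      rw [hLeq]
      intro p hp
      rw [hBapp]
      have : ξ (cj p.1) = 0 := h2 p.1 ⟨p, hp, rfl⟩
      simp [cjDual, this]
    have := hLLbar (0, ξ) hmem1 (by simpa using hmem2)
    exact congrArg Prod.snd this
  -- conclude S ⊔ cj '' S = ⊤
  set T : Submodule ℂ W := Submodule.map cj S with hT
  have htop : S ⊔ T = ⊤ := by
    rw [← Subspace.dualAnnihilator_inj, Submodule.dualAnnihilator_top]
    rw [Submodule.eq_bot_iff]
    intro ξ hξ
    rw [Submodule.mem_dualAnnihilator] at hξ
    refine key ξ (fun a ha => hξ a (Submodule.mem_sup_left ha)) (fun b hb => ?_)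
    exact hξ (cj b) (Submodule.mem_sup_right ⟨b, hb, rfl⟩)
  intro w
  have hw : w ∈ S ⊔ T := htop ▸ Submodule.mem_top
  obtain ⟨a, ha, t, ht, hat⟩ := Submodule.mem_sup.mp hw
  obtain ⟨b, hb, rfl⟩ := ht
  exact ⟨a, ha, b, hb, hat.symm⟩
end
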